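/- (Birman–Schwinger principle) Let d ≥ 1 and let H₀ and V be bounded positive (i.e. self-adjoint and nonnegative) operators on ℓ²(ℤ^d;ℂ), with V compact. For μ < 0, the operator H₀ − μ·1 is boundedly invertible, and the Birman–Schwinger operator B(μ) := V^{1/2}(H₀ − μ)⁻¹V^{1/2} (with V^{1/2} the positive square root of V) is a compact, self-adjoint, positive operator. Then for every μ < 0 and every M ∈ ℕ: μ is an eigenvalue of H₀ − V whose eigenspace has dimension M if and only if 1 is an eigenvalue of B(μ) whose eigenspace has dimension M. -/

import Mathlib

open MeasureTheory

noncomputable section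

/-- The Hilbert space `ℓ²(ℤ^d; ℂ)`. -/
abbrev lpZ (d : ℕ) := lp (fun _ : Fin d → ℤ => ℂ) 2

/-!
For `μ < 0` the operator `H₀ - μ` dominates `-μ > 0`, so it is strictly positive and so is its
inverse; conjugating by the self-adjoint `W = V^{1/2}` keeps it positive. Compactness of
`B(μ) = W (H₀ - μ)⁻¹ W` reduces to that of `W`, which follows from
`‖W x‖² = ⟪V x, x⟫ ≤ ‖V x‖ ‖x‖`. The eigenspace statement is algebraic: if
`(H₀ - W W) x = μ x` then `(H₀ - μ)⁻¹ W W x = x`, so `W x` is fixed by `B(μ)`; conversely a fixed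
point `y` of `B(μ)` is `W x` for `x = (H₀ - μ)⁻¹ W y`, and these two maps are mutually inverse
between the eigenspaces.
-/

open Metric in
theorem TotallyBounded.image_of_forall_dist_lt {α β γ : Type*} [PseudoMetricSpace β]
    [PseudoMetricSpace γ] {f : α → β} {g : α → γ} {s : Set α} (hg : TotallyBounded (g '' s))
    (hfg : ∀ ε > 0, ∃ δ > 0, ∀ x ∈ s, ∀ y ∈ s, dist (g x) (g y) < δ → dist (f x) (f y) < ε) :
    TotallyBounded (f '' s) := by
  refine totallyBounded_iff.mpr fun ε hε => ?_
  obtain ⟨δ, hδ, hδε⟩ := hfg ε hε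
  obtain ⟨t, hts, htfin, hcover⟩ := Set.exists_subset_image_finite_and.mp
    (totallyBounded_iff_subset.mp hg _ (dist_mem_uniformity hδ))
  refine ⟨f '' t, htfin.image f, ?_⟩
  rintro _ ⟨x, hx, rfl⟩
  obtain ⟨_, ⟨y, hy, rfl⟩, hxy⟩ := Set.mem_iUnion₂.mp (hcover ⟨x, hx, rfl⟩)
  exact Set.mem_biUnion (Set.mem_image_of_mem f hy) (hδε x hx y (hts hy) hxy)

open ContinuousLinearMap Metric in
open scoped InnerProduct in
theorem IsCompactOperator.of_adjoint_comp_self {𝕜 E F : Type*} [RCLike 𝕜] [NormedAddCommGroup E]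
    [InnerProductSpace 𝕜 E] [CompleteSpace E] [NormedAddCommGroup F] [InnerProductSpace 𝕜 F]
    [CompleteSpace F] {T : E →L[𝕜] F} (hT : IsCompactOperator (T† ∘L T)) :
    IsCompactOperator T := by
  have hdist (x y : E) : dist (T x) (T y) ^ 2 ≤ dist ((T† ∘L T) x) ((T† ∘L T) y) * dist x y := by
    simp only [dist_eq_norm, ← map_sub, apply_norm_sq_eq_inner_adjoint_left]
    exact (RCLike.re_le_norm _).trans (norm_inner_le_norm _ _)
  refine (isCompactOperator_iff_isCompact_closure_image_closedBall (T : E →ₗ[𝕜] F) one_pos).mpr ?_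
  refine TotallyBounded.isCompact_of_isClosed (totallyBounded_closure.mpr ?_) isClosed_closure
  refine (hT.isCompact_closure_image_closedBall 1).totallyBounded.subset subset_closure
    |>.image_of_forall_dist_lt fun ε hε => ⟨ε ^ 2 / 2, by positivity,
      fun x hx y hy (hxy : dist ((T† ∘L T) x) ((T† ∘L T) y) < ε ^ 2 / 2) => ?_⟩
  have hxy₂ : dist x y ≤ 2 := by
    linarith [dist_triangle_right x y 0, mem_closedBall.mp hx, mem_closedBall.mp hy]
  refine lt_of_pow_lt_pow_left₀ 2 hε.le ?_
  calc dist (T x) (T y) ^ 2 ≤ dist ((T† ∘L T) x) ((T† ∘L T) y) * dist x y := hdist x y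
    _ < ε ^ 2 := by nlinarith [dist_nonneg (x := (T† ∘L T) x) (y := (T† ∘L T) y)]

namespace ContinuousLinearMap

variable {E : Type*} [NormedAddCommGroup E] [InnerProductSpace ℂ E] [CompleteSpace E]

theorem IsPositive.isStrictlyPositive_sub_smul_one {T : E →L[ℂ] E} (hT : T.IsPositive) {μ : ℝ}
    (hμ : μ < 0) : IsStrictlyPositive (T - (μ : ℂ) • 1) := by
  rw [sub_eq_add_neg, ← neg_smul, ← Complex.ofReal_neg, Complex.coe_smul]
  exact (isStrictlyPositive_one.smul (neg_pos.mpr hμ)).nonneg_add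
    ((nonneg_iff_isPositive T).mpr hT)

theorem IsPositive.conj_ringInverse_sub_smul_one {T S : E →L[ℂ] E} (hT : T.IsPositive)
    (hS : IsSelfAdjoint S) {μ : ℝ} (hμ : μ < 0) :
    (S ∘L Ring.inverse (T - (μ : ℂ) • 1) ∘L S).IsPositive := by
  have hR := (nonneg_iff_isPositive _).mp
    (hT.isStrictlyPositive_sub_smul_one hμ).ringInverse.nonneg
  simpa only [hS.adjoint_eq] using hR.conj_adjoint S

end ContinuousLinearMap

namespace Module.End

variable {R M : Type*} [CommRing R] [AddCommGroup M] [Module R M]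

def birmanSchwingerEquiv (H U W G : M →ₗ[R] M) (μ : R)
    (hGH : ∀ x, G (H x - μ • x) = x) (hHG : ∀ x, H (G x) - μ • G x = x) :
    eigenspace (H - U ∘ₗ W) μ ≃ₗ[R] eigenspace (W ∘ₗ G ∘ₗ U) 1 :=
  have mem_left (x : M) : x ∈ eigenspace (H - U ∘ₗ W) μ ↔ H x - μ • x = U (W x) := by
    rw [mem_eigenspace_iff, LinearMap.sub_apply, LinearMap.comp_apply, sub_eq_iff_eq_add,
      ← sub_eq_iff_eq_add', eq_comm]
  have mem_right (y : M) : y ∈ eigenspace (W ∘ₗ G ∘ₗ U) 1 ↔ W (G (U y)) = y := by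
    rw [mem_eigenspace_iff, one_smul]; rfl
  LinearEquiv.ofLinearMap
    (W.restrict fun x hx => (mem_right _).mpr <| by rw [← (mem_left x).mp hx, hGH])
    ((G ∘ₗ U).restrict fun y hy => (mem_left _).mpr <| by
      rw [LinearMap.comp_apply, hHG, (mem_right y).mp hy])
    (by ext ⟨y, hy⟩; exact (mem_right y).mp hy)
    (by ext ⟨x, hx⟩; simp [← (mem_left x).mp hx, hGH])

theorem hasEigenvalue_iff_of_linearEquiv {f g : End R M} {a b : R}
    (e : eigenspace f a ≃ₗ[R] eigenspace g b) : HasEigenvalue f a ↔ HasEigenvalue g b := by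
  simp only [hasEigenvalue_iff, ← Submodule.nontrivial_iff_ne_bot, e.nontrivial_congr]

end Module.End

theorem birman_schwinger_principle_general
    (d : ℕ)
    (H₀ V : lpZ d →L[ℂ] lpZ d)
    (hH₀ : H₀.IsPositive) (hVcompact : IsCompactOperator V)
    (W : lpZ d →L[ℂ] lpZ d) (hW : W.IsPositive) (hWsq : W ∘L W = V)
    (μ : ℝ) (hμ : μ < 0) :
    IsUnit (H₀ - (μ : ℂ) • (1 : lpZ d →L[ℂ] lpZ d)) ∧
    IsCompactOperator
      (W ∘L Ring.inverse (H₀ - (μ : ℂ) • (1 : lpZ d →L[ℂ] lpZ d)) ∘L W) ∧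
    IsSelfAdjoint (W ∘L Ring.inverse (H₀ - (μ : ℂ) • (1 : lpZ d →L[ℂ] lpZ d)) ∘L W) ∧
    (W ∘L Ring.inverse (H₀ - (μ : ℂ) • (1 : lpZ d →L[ℂ] lpZ d)) ∘L W).IsPositive ∧
    ∀ M : ℕ,
      (Module.End.HasEigenvalue (↑(H₀ - V) : lpZ d →ₗ[ℂ] lpZ d) (μ : ℂ) ∧
        Module.rank ℂ
          (Module.End.eigenspace (↑(H₀ - V) : lpZ d →ₗ[ℂ] lpZ d) (μ : ℂ)) = M) ↔
      (Module.End.HasEigenvalue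
          (↑(W ∘L Ring.inverse (H₀ - (μ : ℂ) • (1 : lpZ d →L[ℂ] lpZ d)) ∘L W) :
            lpZ d →ₗ[ℂ] lpZ d) 1 ∧
        Module.rank ℂ
          (Module.End.eigenspace
            (↑(W ∘L Ring.inverse (H₀ - (μ : ℂ) • (1 : lpZ d →L[ℂ] lpZ d)) ∘L W) :
              lpZ d →ₗ[ℂ] lpZ d) 1) = M) := by
  set A := H₀ - (μ : ℂ) • (1 : lpZ d →L[ℂ] lpZ d)
  have hA : IsUnit A := (hH₀.isStrictlyPositive_sub_smul_one hμ).isUnit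
  have hB := hH₀.conj_ringInverse_sub_smul_one hW.isSelfAdjoint hμ
  have hWcompact : IsCompactOperator W :=
    .of_adjoint_comp_self (by rwa [hW.isSelfAdjoint.adjoint_eq, hWsq])
  refine ⟨hA, hWcompact.comp_clm _, hB.isSelfAdjoint, hB, fun M => ?_⟩
  have e : Module.End.eigenspace (↑(H₀ - V) : lpZ d →ₗ[ℂ] lpZ d) μ ≃ₗ[ℂ]
      Module.End.eigenspace (↑(W ∘L Ring.inverse A ∘L W) : lpZ d →ₗ[ℂ] lpZ d) 1 := by
    subst hWsq
    -- the ascription makes `Ring.inverse` act on `A` before the coercion to a linear map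
    exact Module.End.birmanSchwingerEquiv (H₀ : lpZ d →ₗ[ℂ] lpZ d) W W
      (Ring.inverse A : lpZ d →L[ℂ] lpZ d) μ
      (fun x => congr($(Ring.inverse_mul_cancel A hA) x))
      (fun x => congr($(Ring.mul_inverse_cancel A hA) x))
  exact and_congr (Module.End.hasEigenvalue_iff_of_linearEquiv e) (by rw [e.rank_eq])

/-- Birman–Schwinger principle.  Let `H₀, V` be bounded positive operators on
`ℓ²(ℤ^d;ℂ)` with `V` compact, and let `W = V^{1/2}` be the positive square root of `V`
(characterized by `W ≥ 0` and `W ∘ W = V`).  Then for `μ < 0` the operator `H₀ − μ` is boundedly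
invertible, the Birman–Schwinger operator `B(μ) = V^{1/2}(H₀ − μ)⁻¹V^{1/2}` is compact,
self-adjoint and positive, and `μ` is an eigenvalue of `H₀ − V` with `M`-dimensional eigenspace
iff `1` is an eigenvalue of `B(μ)` with `M`-dimensional eigenspace. -/
theorem birman_schwinger_principle
    (d : ℕ) (hd : 1 ≤ d)
    (H₀ V : lpZ d →L[ℂ] lpZ d)
    (hH₀ : H₀.IsPositive) (hV : V.IsPositive) (hVcompact : IsCompactOperator V)
    (W : lpZ d →L[ℂ] lpZ d) (hW : W.IsPositive) (hWsq : W ∘L W = V)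
    (μ : ℝ) (hμ : μ < 0) :
    IsUnit (H₀ - (μ : ℂ) • (1 : lpZ d →L[ℂ] lpZ d)) ∧
    IsCompactOperator
      (W ∘L Ring.inverse (H₀ - (μ : ℂ) • (1 : lpZ d →L[ℂ] lpZ d)) ∘L W) ∧
    IsSelfAdjoint (W ∘L Ring.inverse (H₀ - (μ : ℂ) • (1 : lpZ d →L[ℂ] lpZ d)) ∘L W) ∧
    (W ∘L Ring.inverse (H₀ - (μ : ℂ) • (1 : lpZ d →L[ℂ] lpZ d)) ∘L W).IsPositive ∧
    ∀ M : ℕ,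
      (Module.End.HasEigenvalue (↑(H₀ - V) : lpZ d →ₗ[ℂ] lpZ d) (μ : ℂ) ∧
        Module.rank ℂ
          (Module.End.eigenspace (↑(H₀ - V) : lpZ d →ₗ[ℂ] lpZ d) (μ : ℂ)) = M) ↔
      (Module.End.HasEigenvalue
          (↑(W ∘L Ring.inverse (H₀ - (μ : ℂ) • (1 : lpZ d →L[ℂ] lpZ d)) ∘L W) :
            lpZ d →ₗ[ℂ] lpZ d) 1 ∧
        Module.rank ℂ
          (Module.End.eigenspace
            (↑(W ∘L Ring.inverse (H₀ - (μ : ℂ) • (1 : lpZ d →L[ℂ] lpZ d)) ∘L W) :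
              lpZ d →ₗ[ℂ] lpZ d) 1) = M) :=
  birman_schwinger_principle_general d H₀ V hH₀ hVcompact W hW hWsq μ hμ
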